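/- arXiv:2506.03976 — 2 statements merged into one kernel-verified Lean document; each statement's English description precedes it below -/
import Mathlib

section
/- For probability distributions P, Q on a finite alphabet X with full support and any α > 0, the variational characterization D_{α/(1+α)}(P‖Q) = min over probability distributions V on X of (α D(V‖P) + D(V‖Q)) holds. -/
open scoped BigOperators

/-- Kullback–Leibler divergence between pmfs on a finite alphabet
(convention `0 log 0 = 0`). -/
noncomputable def klDiv {X : Type*} [Fintype X] (P Q : X → ℝ) : ℝ :=
  ∑ x, P x * Real.log (P x / Q x)

/-- Rényi divergence of order `lam ∈ (0,1)` between pmfs on a finite alphabet. -/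
noncomputable def renyiDiv {X : Type*} [Fintype X] (lam : ℝ) (P Q : X → ℝ) : ℝ :=
  (1 / (lam - 1)) * Real.log (∑ x, P x ^ lam * Q x ^ (1 - lam))

/-!
For `λ = α / (1 + α)` we have `α D(V‖P) + D(V‖Q) = (1 + α) (λ D(V‖P) + (1 - λ) D(V‖Q))`, and the
convex combination of divergences equals `D(V‖W) - log Z`, where `W ∝ P^λ Q^(1-λ)` is the
normalized geometric mixture and `Z = ∑ P^λ Q^(1-λ)`. Since `-(1 + α) log Z` is exactly the Rényi
divergence of order `λ`, the objective is `(1 + α) D(V‖W) + D_λ(P‖Q)`, which by Gibbs' inequality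
is minimized at `V = W`.
-/

open Finset Real

section

variable {X : Type*} [Fintype X]

theorem sub_le_mul_log_div {v w : ℝ} (hv : 0 ≤ v) (hw : 0 < w) : v - w ≤ v * log (v / w) := by
  have h := Real.self_sub_one_le_mul_log (div_nonneg hv hw.le)
  calc v - w = w * (v / w - 1) := by field_simp
    _ ≤ w * (v / w * log (v / w)) := mul_le_mul_of_nonneg_left h hw.le
    _ = v * log (v / w) := by field_simp

theorem klDiv_nonneg {V W : X → ℝ} (hV : ∀ x, 0 ≤ V x) (hW : ∀ x, 0 < W x)
    (hsum : ∑ x, V x = ∑ x, W x) : 0 ≤ klDiv V W := by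
  calc 0 = ∑ x, (V x - W x) := by rw [sum_sub_distrib, hsum, sub_self]
    _ ≤ klDiv V W := sum_le_sum fun x _ => sub_le_mul_log_div (hV x) (hW x)

@[simp]
theorem klDiv_self (V : X → ℝ) : klDiv V V = 0 :=
  sum_eq_zero fun x _ => by by_cases hx : V x = 0 <;> simp [hx]

noncomputable def chernoffCoeff (lam : ℝ) (P Q : X → ℝ) : ℝ :=
  ∑ x, P x ^ lam * Q x ^ (1 - lam)

noncomputable def geomMix (lam : ℝ) (P Q : X → ℝ) (x : X) : ℝ :=
  P x ^ lam * Q x ^ (1 - lam) / chernoffCoeff lam P Q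

variable {P Q : X → ℝ} (hP : ∀ x, 0 < P x) (hQ : ∀ x, 0 < Q x) (lam : ℝ)
include hP hQ

theorem chernoffCoeff_pos [Nonempty X] : 0 < chernoffCoeff lam P Q :=
  sum_pos (fun x _ => by have := hP x; have := hQ x; positivity) univ_nonempty

theorem geomMix_pos [Nonempty X] (x : X) : 0 < geomMix lam P Q x := by
  have := hP x; have := hQ x; have := chernoffCoeff_pos hP hQ lam
  unfold geomMix; positivity

theorem sum_geomMix [Nonempty X] : ∑ x, geomMix lam P Q x = 1 := by
  simp only [geomMix, ← sum_div]
  exact div_self (chernoffCoeff_pos hP hQ lam).ne'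

theorem log_geomMix [Nonempty X] (x : X) :
    log (geomMix lam P Q x) =
      lam * log (P x) + (1 - lam) * log (Q x) - log (chernoffCoeff lam P Q) := by
  have := hP x; have := hQ x
  rw [geomMix, log_div (by positivity) (chernoffCoeff_pos hP hQ lam).ne',
    log_mul (by positivity) (by positivity), log_rpow (hP x), log_rpow (hQ x)]

theorem mul_klDiv_add_mul_klDiv [Nonempty X] {V : X → ℝ} (hV : ∑ x, V x = 1) :
    lam * klDiv V P + (1 - lam) * klDiv V Q =
      klDiv V (geomMix lam P Q) - log (chernoffCoeff lam P Q) := by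
  have hpt : ∀ x, lam * (V x * log (V x / P x)) + (1 - lam) * (V x * log (V x / Q x)) =
      V x * log (V x / geomMix lam P Q x) - V x * log (chernoffCoeff lam P Q) := fun x => by
    by_cases hx : V x = 0
    · simp [hx]
    rw [log_div hx (hP x).ne', log_div hx (hQ x).ne',
      log_div hx (geomMix_pos hP hQ lam x).ne', log_geomMix hP hQ lam x]
    ring
  simp only [klDiv, mul_sum, ← sum_add_distrib, hpt, sum_sub_distrib, ← sum_mul, hV, one_mul]

end

theorem stmt4_general {X : Type*} [Fintype X] [Nonempty X]
    (P Q : X → ℝ) (hP0 : ∀ x, 0 < P x)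
    (hQ0 : ∀ x, 0 < Q x)
    (α : ℝ) (hα : 0 < α) :
    IsLeast {r : ℝ | ∃ V : X → ℝ, (∀ x, 0 ≤ V x) ∧ (∑ x, V x = 1) ∧
        r = α * klDiv V P + klDiv V Q}
      (renyiDiv (α / (1 + α)) P Q) := by
  set lam := α / (1 + α)
  set W := geomMix lam P Q
  have hW0 := geomMix_pos hP0 hQ0 lam
  have hW1 := sum_geomMix hP0 hQ0 lam
  have objective_eq : ∀ V : X → ℝ, ∑ x, V x = 1 →
      α * klDiv V P + klDiv V Q = (1 + α) * klDiv V W + renyiDiv lam P Q := fun V hV => by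
    have hlam : lam - 1 = -(1 + α)⁻¹ := by unfold lam; field_simp; ring
    have hmix := mul_klDiv_add_mul_klDiv hP0 hQ0 lam hV
    rw [renyiDiv, hlam, ← chernoffCoeff]
    unfold lam at hmix
    field_simp at hmix ⊢
    linear_combination hmix
  refine ⟨⟨W, fun x => (hW0 x).le, hW1, ?_⟩, ?_⟩
  · rw [objective_eq W hW1, klDiv_self, mul_zero, zero_add]
  · rintro r ⟨V, hV0, hV1, rfl⟩
    rw [objective_eq V hV1]
    exact le_add_of_nonneg_left
      (mul_nonneg (by positivity) (klDiv_nonneg hV0 hW0 (hV1.trans hW1.symm)))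

theorem stmt4 {X : Type*} [Fintype X] [Nonempty X]
    (P Q : X → ℝ) (hP0 : ∀ x, 0 < P x) (hP1 : ∑ x, P x = 1)
    (hQ0 : ∀ x, 0 < Q x) (hQ1 : ∑ x, Q x = 1)
    (α : ℝ) (hα : 0 < α) :
    IsLeast {r : ℝ | ∃ V : X → ℝ, (∀ x, 0 ≤ V x) ∧ (∑ x, V x = 1) ∧
        r = α * klDiv V P + klDiv V Q}
      (renyiDiv (α / (1 + α)) P Q) :=
  stmt4_general P Q hP0 hQ0 α hα
end

section
/- Let X be a finite alphabet and P a probability distribution on X with full support. For any type (empirical distribution) Ω of length-n sequences, the probability under the i.i.d. measure P^n of the type class T^n_Ω satisfies P^n(T^n_Ω) ≤ exp(-n D(Ω‖P)). -/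
open scoped BigOperators Classical

theorem stmt13 {X : Type*} [Fintype X] [Nonempty X]
    (P : X → ℝ) (hP0 : ∀ x, 0 < P x) (hP1 : ∑ x, P x = 1)
    (n : ℕ) (hn : 1 ≤ n) (k : X → ℕ) (hk : ∑ x, k x = n) :
    (∑ s : Fin n → X,
        if (∀ x, (Finset.univ.filter fun i => s i = x).card = k x) then
          ∏ i, P (s i) else 0)
      ≤ Real.exp (-(n : ℝ) *
          ∑ x, ((k x : ℝ) / n) * Real.log (((k x : ℝ) / n) / P x)) := by
  classical
  have hn' : (0:ℝ) < (n:ℝ) := by exact_mod_cast Nat.lt_of_lt_of_le Nat.zero_lt_one hn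
  set Q : X → ℝ := fun x => (k x : ℝ) / n with hQdef
  have hQ0 : ∀ x, 0 ≤ Q x := fun x => by positivity
  have hQsum : ∑ x, Q x = 1 := by
    simp only [hQdef, ← Finset.sum_div]
    rw [show (∑ x, ((k x:ℝ))) = (n:ℝ) by exact_mod_cast congrArg Nat.cast hk]
    field_simp
  set T : Finset (Fin n → X) :=
    Finset.univ.filter (fun s => ∀ x, (Finset.univ.filter fun i => s i = x).card = k x) with hT
  have prod_eq : ∀ (f : X → ℝ) (s : Fin n → X), s ∈ T → ∏ i, f (s i) = ∏ x, f x ^ k x := by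
    intro f s hs
    rw [hT, Finset.mem_filter] at hs
    have hcard := hs.2
    calc ∏ i, f (s i)
        = ∏ x, ∏ i ∈ Finset.univ.filter (fun i => s i = x), f (s i) := by
          exact (Finset.prod_fiberwise Finset.univ (fun i => s i) (fun i => f (s i))).symm
      _ = ∏ x, f x ^ k x := by
          refine Finset.prod_congr rfl fun x _ => ?_
          rw [Finset.prod_congr rfl (fun i hi => by rw [(Finset.mem_filter.mp hi).2]),
            Finset.prod_const, hcard x]
  have lhs_eq : (∑ s : Fin n → X,
      if (∀ x, (Finset.univ.filter fun i => s i = x).card = k x) then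
        ∏ i, P (s i) else 0) = (T.card : ℝ) * ∏ x, P x ^ k x := by
    rw [← Finset.sum_filter, ← hT,
      Finset.sum_congr rfl (fun s hs => prod_eq P s hs), Finset.sum_const, nsmul_eq_mul]
  have hQT : (T.card : ℝ) * ∏ x, Q x ^ k x ≤ 1 := by
    have h1 : ∑ s ∈ T, ∏ i, Q (s i) = (T.card : ℝ) * ∏ x, Q x ^ k x := by
      rw [Finset.sum_congr rfl (fun s hs => prod_eq Q s hs), Finset.sum_const, nsmul_eq_mul]
    have h2 : ∑ s ∈ T, ∏ i, Q (s i) ≤ ∑ s : Fin n → X, ∏ i, Q (s i) :=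
      Finset.sum_le_sum_of_subset_of_nonneg (Finset.subset_univ T)
        (fun s _ _ => Finset.prod_nonneg fun i _ => hQ0 _)
    have h3 : ∑ s : Fin n → X, ∏ i, Q (s i) = 1 := by
      rw [← Fintype.piFinset_univ, ← Finset.prod_univ_sum]
      simp [hQsum]
    rw [← h1]; rw [h3] at h2; exact h2
  have hterm : ∀ x, -((n:ℝ) * (Q x * Real.log (Q x / P x)))
      = (k x : ℝ) * Real.log (P x / Q x) := by
    intro x
    by_cases h : k x = 0
    · simp [h, hQdef]
    · have hnq : (n:ℝ) * Q x = (k x : ℝ) := by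
        simp only [hQdef]; field_simp
      calc -((n:ℝ) * (Q x * Real.log (Q x / P x)))
          = ((n:ℝ) * Q x) * (- Real.log (Q x / P x)) := by ring
        _ = (k x:ℝ) * Real.log (P x / Q x) := by
            rw [hnq, ← Real.log_inv, inv_div]
  have rhs_eq : Real.exp (-(n : ℝ) * ∑ x, Q x * Real.log (Q x / P x))
      = ∏ x, (P x / Q x) ^ k x := by
    rw [show -(n : ℝ) * ∑ x, Q x * Real.log (Q x / P x)
        = ∑ x, -((n:ℝ) * (Q x * Real.log (Q x / P x))) by
        rw [Finset.mul_sum]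
        exact Finset.sum_congr rfl fun x _ => by ring]
    rw [Finset.sum_congr rfl (fun x _ => hterm x), Real.exp_sum]
    refine Finset.prod_congr rfl fun x _ => ?_
    by_cases h : k x = 0
    · simp [h]
    · have hQx : 0 < Q x := by
        simp only [hQdef]
        have : 0 < k x := Nat.pos_of_ne_zero h
        positivity
      have hr : 0 < P x / Q x := div_pos (hP0 x) hQx
      rw [Real.exp_nat_mul, Real.exp_log hr]
  have hprodP : ∏ x, P x ^ k x = (∏ x, Q x ^ k x) * ∏ x, (P x / Q x) ^ k x := by
    rw [← Finset.prod_mul_distrib]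
    refine Finset.prod_congr rfl fun x _ => ?_
    by_cases h : k x = 0
    · simp [h]
    · have hQx : Q x ≠ 0 := by
        simp only [hQdef]
        have : 0 < k x := Nat.pos_of_ne_zero h
        positivity
      rw [← mul_pow, mul_div_cancel₀ _ hQx]
  have hPQnn : 0 ≤ ∏ x, (P x / Q x) ^ k x :=
    Finset.prod_nonneg fun x _ => pow_nonneg (div_nonneg (hP0 x).le (hQ0 x)) _
  calc (∑ s : Fin n → X,
        if (∀ x, (Finset.univ.filter fun i => s i = x).card = k x) then
          ∏ i, P (s i) else 0)
      = ((T.card : ℝ) * ∏ x, Q x ^ k x) * ∏ x, (P x / Q x) ^ k x := by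
        rw [lhs_eq, hprodP]; ring
    _ ≤ 1 * ∏ x, (P x / Q x) ^ k x := mul_le_mul_of_nonneg_right hQT hPQnn
    _ = Real.exp (-(n : ℝ) * ∑ x, Q x * Real.log (Q x / P x)) := by rw [one_mul, rhs_eq]
end
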